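/- In the discrete-time square-integrable model, the quadratic coefficient of the mean-variance hedging value function satisfies the backward recursion Y_{k−1} = E[Y_k | F_{k−1}] − (E[Y_k Δ_k S | F_{k−1}])² / E[Y_k (Δ_k S)² | F_{k−1}], with terminal condition Y_T = 1, where Δ_k S = S_k − S_{k−1}. -/

import Mathlib

/-!
The recursion is the dynamic programming principle. Write `1 + ∑_{j ≥ k} ϑ_j Δ_j S = c + G` with
`c = 1 + ϑ_k Δ_k S` known at time `k` and `G` the gains after `k`. Rescaling the strategy after `k`
by `F_k`-measurable factors gives `E[(c + G)² | F_k] ≥ c² Y_k`, and continuing after `k` with `c`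
times an optimal strategy attains this bound in the limit. Conditioning on `F_{k-1}` turns
`E[c² Y_k | F_{k-1}]` into a quadratic in the `F_{k-1}`-measurable `ϑ_k`, whose minimum is the
right-hand side. All multipliers must be bounded to keep the strategies admissible, so both bounds
are reached through truncations.
-/

open MeasureTheory

variable {Ω : Type*} {m : MeasurableSpace Ω}

/-- Admissible discrete-time strategies: predictable and with square-integrable
one-period gains `ϑ_j Δ_j S`. -/
def AdmissibleDiscrete (μ : Measure Ω) (F : Filtration ℕ m)
    (S : ℕ → Ω → ℝ) (ϑ : ℕ → Ω → ℝ) : Prop :=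
  (∀ j, 1 ≤ j → StronglyMeasurable[F (j - 1)] (ϑ j)) ∧
  (∀ j, MemLp (fun ω => ϑ j ω * (S j ω - S (j - 1) ω)) 2 μ)

/-- The gains `∑_{j=k+1}^T ϑ_j Δ_j S` of a strategy from time `k` to the horizon `T`. -/
def gains (S : ℕ → Ω → ℝ) (T k : ℕ) (ϑ : ℕ → Ω → ℝ) (ω : Ω) : ℝ :=
  ∑ j ∈ Finset.Ioc k T, ϑ j ω * (S j ω - S (j - 1) ω)

open Filter Topology ProbabilityTheory

lemma norm_le_one_of_mem_Icc {y : ℝ} (hy : y ∈ Set.Icc (0 : ℝ) 1) : ‖y‖ ≤ 1 :=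
  (Real.norm_eq_abs y).symm ▸ abs_le.mpr ⟨by linarith [hy.1], hy.2⟩

lemma sub_sq_div_le_quadratic {a b c : ℝ} (hc : 0 ≤ c) (hbc : c = 0 → b = 0) (t : ℝ) :
    a - b ^ 2 / c ≤ a + 2 * t * b + t ^ 2 * c := by
  rcases hc.eq_or_lt with hc0 | hc0
  · simp [← hc0, hbc hc0.symm]
  · have hsq : a + 2 * t * b + t ^ 2 * c - (a - b ^ 2 / c) = c * (t + b / c) ^ 2 := by
      field_simp; ring
    nlinarith [mul_nonneg hc0.le (sq_nonneg (t + b / c))]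

lemma quadratic_neg_div_eq {a b c : ℝ} (hbc : c = 0 → b = 0) :
    a + 2 * (-(b / c)) * b + (-(b / c)) ^ 2 * c = a - b ^ 2 / c := by
  rcases eq_or_ne c 0 with hc | hc
  · simp [hc, hbc hc]
  · field_simp; ring

lemma eq_zero_of_forall_int_add_mul_nonneg {a b : ℝ} (h : ∀ n : ℤ, 0 ≤ a + n * b) : b = 0 := by
  by_contra hb
  rcases lt_or_gt_of_ne hb with hb | hb
  · obtain ⟨n, hn⟩ := exists_int_gt (-a / b)
    have := (div_lt_iff_of_neg hb).mp hn
    linarith [h n]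
  · obtain ⟨n, hn⟩ := exists_int_lt (-a / b)
    have := (lt_div_iff₀ hb).mp hn
    linarith [h n]

lemma sq_mul_one_add_inv_mul_sq_le (c g : ℝ) : c ^ 2 * (1 + c⁻¹ * g) ^ 2 ≤ (c + g) ^ 2 := by
  rcases eq_or_ne c 0 with rfl | hc
  · simpa using sq_nonneg g
  · exact le_of_eq (by field_simp)

lemma sq_add_truncation_mul_eq (c : Ω → ℝ) (A : ℝ) (g : ℝ) (ω : Ω) :
    (c ω + truncation c A ω * g) ^ 2
      = truncation c A ω ^ 2 * (1 + g) ^ 2 + (c ω ^ 2 - truncation c A ω ^ 2) := by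
  simp only [truncation, Set.indicator, Function.comp_apply, id]
  split_ifs <;> ring

lemma ae_le_of_forall_le_add_of_tendsto_integral {μ : Measure Ω} {X Z : Ω → ℝ}
    {R : ℕ → Ω → ℝ} (hR : ∀ i, Integrable (R i) μ) (hR0 : ∀ i, 0 ≤ᵐ[μ] R i)
    (hXR : ∀ i, X ≤ᵐ[μ] Z + R i) (hlim : Tendsto (fun i => ∫ ω, R i ω ∂μ) atTop (𝓝 0)) :
    X ≤ᵐ[μ] Z := by
  set L : Ω → ENNReal := fun ω => ⨅ i, ENNReal.ofReal (R i ω)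
  have hL : ∫⁻ ω, L ω ∂μ = 0 := by
    refine le_antisymm (ge_of_tendsto'
      (ENNReal.ofReal_zero ▸ (ENNReal.continuous_ofReal.tendsto 0).comp hlim) fun i => ?_) bot_le
    rw [Function.comp_apply, ofReal_integral_eq_lintegral_ofReal (hR i) (hR0 i)]
    exact lintegral_mono fun ω => iInf_le _ i
  have hLm : AEMeasurable L μ := AEMeasurable.iInf fun i => (hR i).aemeasurable.ennreal_ofReal
  filter_upwards [(lintegral_eq_zero_iff' hLm).mp hL, ae_all_iff.mpr hXR] with ω hLω hXω
  have : ENNReal.ofReal (X ω - Z ω) ≤ L ω :=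
    le_iInf fun i => ENNReal.ofReal_le_ofReal (sub_le_iff_le_add'.mpr (hXω i))
  rw [hLω, Pi.zero_apply, nonpos_iff_eq_zero, ENNReal.ofReal_eq_zero] at this
  linarith

lemma MeasureTheory.StronglyMeasurable.truncation {mF : MeasurableSpace Ω} {f : Ω → ℝ}
    (hf : StronglyMeasurable[mF] f) (A : ℝ) : StronglyMeasurable[mF] (truncation f A) :=
  (stronglyMeasurable_id.indicator measurableSet_Ioc).comp_measurable hf.measurable

/-- `E[Y|𝓕] - E[YΔ|𝓕]² / E[YΔ²|𝓕]`, the minimum over `𝓕`-measurable `ξ` of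
`E[(1 + ξΔ)² Y | 𝓕]`; where `E[YΔ²|𝓕] = 0` also `E[YΔ|𝓕] = 0`, and `x / 0 = 0` gives the
minimum `E[Y|𝓕]`. -/
noncomputable def condQuadMin (μ : Measure Ω) (mF : MeasurableSpace Ω) (Y Δ : Ω → ℝ) :
    Ω → ℝ := fun ω =>
  μ[Y | mF] ω - (μ[fun ω' => Y ω' * Δ ω' | mF] ω) ^ 2 / μ[fun ω' => Y ω' * Δ ω' ^ 2 | mF] ω

section CondQuadratic

variable {μ : Measure Ω} [IsFiniteMeasure μ] {mF : MeasurableSpace Ω} {Y Δ : Ω → ℝ}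

lemma condExp_one_add_mul_sq_mul (hYm : AEStronglyMeasurable[m] Y μ)
    (hY : ∀ᵐ ω ∂μ, Y ω ∈ Set.Icc (0 : ℝ) 1) (hΔ : MemLp Δ 2 μ) {ξ : Ω → ℝ}
    (hξ : StronglyMeasurable[mF] ξ) (hξΔ : MemLp (fun ω => ξ ω * Δ ω) 2 μ) :
    μ[fun ω => (1 + ξ ω * Δ ω) ^ 2 * Y ω | mF] =ᵐ[μ] fun ω =>
      μ[Y | mF] ω + 2 * ξ ω * μ[fun ω' => Y ω' * Δ ω' | mF] ω
        + ξ ω ^ 2 * μ[fun ω' => Y ω' * Δ ω' ^ 2 | mF] ω := by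
  have hYb : ∀ᵐ ω ∂μ, ‖Y ω‖ ≤ 1 := by
    filter_upwards [hY] with ω hω using norm_le_one_of_mem_Icc hω
  have hYi : Integrable Y μ := by simpa using (integrable_const (1 : ℝ)).bdd_mul hYm hYb
  have hYΔ : Integrable (fun ω => 2 * (Y ω * Δ ω)) μ :=
    ((hΔ.integrable one_le_two).bdd_mul hYm hYb).const_mul 2
  have hYΔ2 : Integrable (fun ω => Y ω * Δ ω ^ 2) μ := hΔ.integrable_sq.bdd_mul hYm hYb
  have hξYΔ : Integrable (ξ * fun ω => 2 * (Y ω * Δ ω)) μ :=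
    (((hξΔ.integrable one_le_two).bdd_mul hYm hYb).const_mul 2).congr
      (ae_of_all _ fun ω => by simp only [Pi.mul_apply]; ring)
  have hξ2YΔ2 : Integrable ((ξ * ξ) * fun ω => Y ω * Δ ω ^ 2) μ :=
    (hξΔ.integrable_sq.bdd_mul hYm hYb).congr
      (ae_of_all _ fun ω => by simp only [Pi.mul_apply]; ring)
  have hsplit : (fun ω => (1 + ξ ω * Δ ω) ^ 2 * Y ω)
      = Y + ((ξ * fun ω => 2 * (Y ω * Δ ω)) + (ξ * ξ) * fun ω => Y ω * Δ ω ^ 2) := by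
    funext ω; simp only [Pi.add_apply, Pi.mul_apply]; ring
  rw [hsplit]
  filter_upwards [condExp_add hYi (hξYΔ.add hξ2YΔ2) mF, condExp_add hξYΔ hξ2YΔ2 mF,
    condExp_mul_of_stronglyMeasurable_left hξ hξYΔ hYΔ,
    condExp_mul_of_stronglyMeasurable_left (hξ.mul hξ) hξ2YΔ2 hYΔ2,
    condExp_smul (2 : ℝ) (fun ω => Y ω * Δ ω) mF] with ω h₁ h₂ h₃ h₄ h₅
  simp only [Pi.add_apply, Pi.mul_apply, Pi.smul_apply, smul_eq_mul] at h₁ h₂ h₃ h₄ h₅ ⊢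
  rw [h₁, h₂, h₃, h₄,
    show (fun ω => 2 * (Y ω * Δ ω)) = (2 : ℝ) • fun ω => Y ω * Δ ω from rfl, h₅]
  ring

lemma ae_condExp_mul_eq_zero_of_condExp_mul_sq_eq_zero (hYm : AEStronglyMeasurable[m] Y μ)
    (hY : ∀ᵐ ω ∂μ, Y ω ∈ Set.Icc (0 : ℝ) 1) (hΔ : MemLp Δ 2 μ) :
    ∀ᵐ ω ∂μ, μ[fun ω' => Y ω' * Δ ω' ^ 2 | mF] ω = 0 → μ[fun ω' => Y ω' * Δ ω' | mF] ω = 0 := by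
  have hnonneg : ∀ n : ℤ, ∀ᵐ ω ∂μ, 0 ≤ μ[Y | mF] ω + 2 * n * μ[fun ω' => Y ω' * Δ ω' | mF] ω
      + (n : ℝ) ^ 2 * μ[fun ω' => Y ω' * Δ ω' ^ 2 | mF] ω := by
    intro n
    have hpos : 0 ≤ᵐ[μ] μ[fun ω => (1 + (n : ℝ) * Δ ω) ^ 2 * Y ω | mF] :=
      condExp_nonneg (by filter_upwards [hY] with ω h using mul_nonneg (sq_nonneg _) h.1)
    filter_upwards [hpos, condExp_one_add_mul_sq_mul hYm hY hΔ stronglyMeasurable_const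
      (hΔ.const_mul (n : ℝ))] with ω h₁ h₂
    exact h₂ ▸ h₁
  -- A quadratic in `n ∈ ℤ` that stays nonnegative cannot be linear with nonzero slope.
  filter_upwards [ae_all_iff.mpr hnonneg] with ω h hC
  have h2B := eq_zero_of_forall_int_add_mul_nonneg (a := μ[Y | mF] ω)
    (b := 2 * μ[fun ω' => Y ω' * Δ ω' | mF] ω) fun n => by linarith [hC ▸ h n]
  linarith

lemma condQuadMin_le_condExp (hYm : AEStronglyMeasurable[m] Y μ)
    (hY : ∀ᵐ ω ∂μ, Y ω ∈ Set.Icc (0 : ℝ) 1) (hΔ : MemLp Δ 2 μ) {ξ : Ω → ℝ}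
    (hξ : StronglyMeasurable[mF] ξ) (hξΔ : MemLp (fun ω => ξ ω * Δ ω) 2 μ) :
    condQuadMin μ mF Y Δ ≤ᵐ[μ] μ[fun ω => (1 + ξ ω * Δ ω) ^ 2 * Y ω | mF] := by
  have hC : 0 ≤ᵐ[μ] μ[fun ω => Y ω * Δ ω ^ 2 | mF] :=
    condExp_nonneg (by filter_upwards [hY] with ω h using mul_nonneg h.1 (sq_nonneg _))
  filter_upwards [hC, ae_condExp_mul_eq_zero_of_condExp_mul_sq_eq_zero hYm hY hΔ,
    condExp_one_add_mul_sq_mul hYm hY hΔ hξ hξΔ] with ω hCω hBC hq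
  rw [hq]
  exact sub_sq_div_le_quadratic hCω hBC _

lemma le_condQuadMin_of_forall_le (hmF : mF ≤ m) (hYm : AEStronglyMeasurable[m] Y μ)
    (hY : ∀ᵐ ω ∂μ, Y ω ∈ Set.Icc (0 : ℝ) 1) (hΔ : MemLp Δ 2 μ) {X : Ω → ℝ}
    (hX : ∀ ξ, StronglyMeasurable[mF] ξ → MemLp ξ ⊤ μ →
      X ≤ᵐ[μ] μ[fun ω => (1 + ξ ω * Δ ω) ^ 2 * Y ω | mF]) :
    X ≤ᵐ[μ] condQuadMin μ mF Y Δ := by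
  set ξ : Ω → ℝ := fun ω => -(μ[fun ω' => Y ω' * Δ ω' | mF] ω / μ[fun ω' => Y ω' * Δ ω' ^ 2 | mF] ω)
  have hξ : StronglyMeasurable[mF] ξ :=
    (stronglyMeasurable_condExp.measurable.div
      stronglyMeasurable_condExp.measurable).neg.stronglyMeasurable
  -- `ξ` minimises the quadratic but need not be bounded, so it is approximated by truncations.
  have htrunc : ∀ n : ℕ, X ≤ᵐ[μ] fun ω => μ[Y | mF] ω
      + 2 * truncation ξ n ω * μ[fun ω' => Y ω' * Δ ω' | mF] ω
      + truncation ξ n ω ^ 2 * μ[fun ω' => Y ω' * Δ ω' ^ 2 | mF] ω := by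
    intro n
    have hξn : StronglyMeasurable[mF] (truncation ξ n) := hξ.truncation n
    have hξnb : MemLp (truncation ξ n) ⊤ μ :=
      (hξ.mono hmF).aestronglyMeasurable.memLp_truncation
    filter_upwards [hX _ hξn hξnb, condExp_one_add_mul_sq_mul hYm hY hΔ hξn (hΔ.mul hξnb)]
      with ω h₁ h₂
    exact h₂ ▸ h₁
  filter_upwards [ae_all_iff.mpr htrunc,
    ae_condExp_mul_eq_zero_of_condExp_mul_sq_eq_zero hYm hY hΔ] with ω h hBC
  obtain ⟨n, hn⟩ := exists_nat_gt |ξ ω|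
  have := h n
  rw [truncation_eq_self hn] at this
  exact this.trans_eq (quadratic_neg_div_eq hBC)

end CondQuadratic

section ConditionalDominance

variable {μ : Measure Ω} [IsFiniteMeasure μ] {mF : MeasurableSpace Ω} {Y c G : Ω → ℝ}

lemma sq_mul_le_condExp_add_sq_of_forall_le (hmF : mF ≤ m) (hc : StronglyMeasurable[mF] c)
    (hG : MemLp G 2 μ) (hcG : Integrable (fun ω => (c ω + G ω) ^ 2) μ)
    (hY : ∀ η, StronglyMeasurable[mF] η → MemLp η ⊤ μ →
      Y ≤ᵐ[μ] μ[fun ω => (1 + η ω * G ω) ^ 2 | mF]) :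
    (fun ω => c ω ^ 2 * Y ω) ≤ᵐ[μ] μ[fun ω => (c ω + G ω) ^ 2 | mF] := by
  -- On `s n = {|c|⁻¹ ≤ n}` the bounded multiplier `η = c⁻¹` turns `c² (1 + ηG)²` into `(c + G)²`.
  set s : ℕ → Set Ω := fun n => {ω | |c ω|⁻¹ ≤ n}
  have hs : ∀ n, MeasurableSet[mF] (s n) := fun n =>
    measurableSet_le (hc.measurable.abs.inv) measurable_const
  have key : ∀ n, ∀ᵐ ω ∂μ, (s n).indicator (fun ω => c ω ^ 2) ω * Y ω
      ≤ μ[fun ω => (c ω + G ω) ^ 2 | mF] ω := by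
    intro n
    set η : Ω → ℝ := (s n).indicator fun ω => (c ω)⁻¹
    set w : Ω → ℝ := (s n).indicator fun ω => c ω ^ 2
    have hη : StronglyMeasurable[mF] η := (hc.measurable.inv.indicator (hs n)).stronglyMeasurable
    have hηb : MemLp η ⊤ μ := memLp_top_of_bound (hη.mono hmF).aestronglyMeasurable n
      (ae_of_all _ fun ω => by
        by_cases hω : ω ∈ s n
        · simp only [η, Set.indicator_of_mem hω, Real.norm_eq_abs, abs_inv]
          exact hω
        · simp [η, hω])
    have hw : StronglyMeasurable[mF] w := (hc.pow 2).indicator (hs n)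
    have hηG : MemLp (fun ω => η ω * G ω) 2 μ := hG.mul' hηb
    have h1ηG : MemLp (fun ω => 1 + η ω * G ω) 2 μ := (memLp_const (1 : ℝ)).add hηG
    have hq : Integrable (fun ω => (1 + η ω * G ω) ^ 2) μ := h1ηG.integrable_sq
    have hw_nonneg : ∀ ω, 0 ≤ w ω := Set.indicator_nonneg fun _ _ => sq_nonneg _
    have hwq_le : ∀ ω, w ω * (1 + η ω * G ω) ^ 2 ≤ (c ω + G ω) ^ 2 := fun ω => by
      by_cases hω : ω ∈ s n
      · simpa [w, η, hω] using sq_mul_one_add_inv_mul_sq_le (c ω) (G ω)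
      · simpa [w, η, hω] using sq_nonneg (c ω + G ω)
    have hwq : Integrable (w * fun ω => (1 + η ω * G ω) ^ 2) μ :=
      hcG.mono' ((hw.mono hmF).aestronglyMeasurable.mul hq.1) (ae_of_all _ fun ω => by
        rw [Real.norm_eq_abs, Pi.mul_apply,
          abs_of_nonneg (mul_nonneg (hw_nonneg ω) (sq_nonneg _))]
        exact hwq_le ω)
    filter_upwards [hY η hη hηb, condExp_mul_of_stronglyMeasurable_left hw hwq hq,
      condExp_mono (m := mF) hwq hcG (ae_of_all _ hwq_le)] with ω hYω hpull hmono
    calc w ω * Y ω ≤ w ω * μ[fun ω => (1 + η ω * G ω) ^ 2 | mF] ω :=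
          mul_le_mul_of_nonneg_left hYω (hw_nonneg ω)
      _ = μ[w * fun ω => (1 + η ω * G ω) ^ 2 | mF] ω := hpull.symm
      _ ≤ _ := hmono
  filter_upwards [ae_all_iff.mpr key] with ω h
  obtain ⟨n, hn⟩ := exists_nat_ge |c ω|⁻¹
  simpa [s, hn] using h n

lemma condExp_add_truncation_mul_sq (hmF : mF ≤ m) (hc : StronglyMeasurable[mF] c)
    (hc2 : MemLp c 2 μ) (hG : MemLp G 2 μ) (hY : Y =ᵐ[μ] μ[fun ω => (1 + G ω) ^ 2 | mF])
    (A : ℝ) :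
    μ[fun ω => (c ω + truncation c A ω * G ω) ^ 2 | mF] =ᵐ[μ] fun ω =>
      c ω ^ 2 * Y ω + (c ω ^ 2 - truncation c A ω ^ 2) * (1 - Y ω) := by
  have ht : StronglyMeasurable[mF] fun ω => truncation c A ω ^ 2 := (hc.truncation A).pow 2
  have ht2 : Integrable (fun ω => truncation c A ω ^ 2) μ :=
    ((hc.mono hmF).aestronglyMeasurable.memLp_truncation (p := 2)).integrable_sq
  have hq : Integrable (fun ω => (1 + G ω) ^ 2) μ :=
    ((memLp_const (1 : ℝ)).add hG).integrable_sq
  have htq : Integrable ((fun ω => truncation c A ω ^ 2) * fun ω => (1 + G ω) ^ 2) μ :=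
    hq.bdd_mul (c := A ^ 2) (ht.mono hmF).aestronglyMeasurable (ae_of_all _ fun ω => by
      rw [Real.norm_eq_abs, abs_of_nonneg (sq_nonneg _), ← sq_abs, ← sq_abs A]
      exact pow_le_pow_left₀ (abs_nonneg _) (abs_truncation_le_bound c A ω) 2)
  have hd : StronglyMeasurable[mF] fun ω => c ω ^ 2 - truncation c A ω ^ 2 := (hc.pow 2).sub ht
  have hdi : Integrable (fun ω => c ω ^ 2 - truncation c A ω ^ 2) μ := hc2.integrable_sq.sub ht2
  have hsplit : (fun ω => (c ω + truncation c A ω * G ω) ^ 2)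
      = ((fun ω => truncation c A ω ^ 2) * fun ω => (1 + G ω) ^ 2)
        + fun ω => c ω ^ 2 - truncation c A ω ^ 2 :=
    funext fun ω => sq_add_truncation_mul_eq c A (G ω) ω
  rw [hsplit]
  filter_upwards [condExp_add htq hdi mF, condExp_mul_of_stronglyMeasurable_left ht htq hq, hY]
    with ω h₁ h₂ h₃
  rw [h₁, Pi.add_apply, h₂, condExp_of_stronglyMeasurable hmF hd hdi, Pi.mul_apply, ← h₃]
  ring

lemma le_condExp_sq_mul_of_forall_le {mG : MeasurableSpace Ω} (hGF : mG ≤ mF) (hmF : mF ≤ m)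
    {X : Ω → ℝ} (hc : StronglyMeasurable[mF] c) (hc2 : MemLp c 2 μ) (hG : MemLp G 2 μ)
    (hY : Y =ᵐ[μ] μ[fun ω => (1 + G ω) ^ 2 | mF]) (hY1 : ∀ᵐ ω ∂μ, Y ω ≤ 1)
    (hX : ∀ η, StronglyMeasurable[mF] η → MemLp η ⊤ μ →
      X ≤ᵐ[μ] μ[fun ω => (c ω + η ω * G ω) ^ 2 | mG]) :
    X ≤ᵐ[μ] μ[fun ω => c ω ^ 2 * Y ω | mG] := by
  -- Use `η = truncation c i`; the error `r i` vanishes as soon as `i > |c|`.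
  set r : ℕ → Ω → ℝ := fun i ω => (c ω ^ 2 - truncation c i ω ^ 2) * (1 - Y ω)
  have hYm : AEStronglyMeasurable[m] Y μ := integrable_condExp.1.congr hY.symm
  have hY01 : ∀ᵐ ω ∂μ, Y ω ∈ Set.Icc (0 : ℝ) 1 := by
    filter_upwards [hY, hY1,
      condExp_nonneg (m := mF) (ae_of_all μ fun ω => sq_nonneg (1 + G ω))] with ω h₁ h₂ h₃
    exact ⟨h₁ ▸ h₃, h₂⟩
  have hr_mem : ∀ i, ∀ᵐ ω ∂μ, r i ω ∈ Set.Icc 0 (c ω ^ 2) := fun i => by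
    filter_upwards [hY01] with ω hω
    have ht : truncation c i ω ^ 2 ≤ c ω ^ 2 := sq_le_sq.mpr (abs_truncation_le_abs_self c i ω)
    exact ⟨mul_nonneg (by linarith) (by linarith [hω.2]),
      by nlinarith [hω.1, sq_nonneg (truncation c i ω)]⟩
  have hr_norm : ∀ i, ∀ᵐ ω ∂μ, ‖r i ω‖ ≤ c ω ^ 2 := fun i => by
    filter_upwards [hr_mem i] with ω hω
    rw [Real.norm_eq_abs, abs_of_nonneg hω.1]
    exact hω.2
  have hr : ∀ i, Integrable (r i) μ := fun i =>
    hc2.integrable_sq.mono' (((hc2.aestronglyMeasurable.pow 2).sub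
      ((hc.mono hmF).aestronglyMeasurable.truncation.pow 2)).mul
        (aestronglyMeasurable_const.sub hYm)) (hr_norm i)
  have hcY : Integrable (fun ω => c ω ^ 2 * Y ω) μ := hc2.integrable_sq.mul_bdd hYm
    (by filter_upwards [hY01] with ω hω using norm_le_one_of_mem_Icc hω)
  refine ae_le_of_forall_le_add_of_tendsto_integral (R := fun i => μ[r i | mG])
    (fun i => integrable_condExp)
    (fun i => condExp_nonneg (by filter_upwards [hr_mem i] with ω hω using hω.1)) (fun i => ?_) ?_
  · filter_upwards [hX _ (hc.truncation i) (hc.mono hmF).aestronglyMeasurable.memLp_truncation,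
      condExp_condExp_of_le (μ := μ) hGF hmF
        (f := fun ω => (c ω + truncation c i ω * G ω) ^ 2),
      condExp_congr_ae (m := mG) (condExp_add_truncation_mul_sq hmF hc hc2 hG hY i),
      condExp_add hcY (hr i) mG] with ω h₁ h₂ h₃ h₄
    calc X ω ≤ _ := h₁
      _ = _ := h₂.symm
      _ = _ := h₃
      _ = _ := h₄
  · simp_rw [integral_condExp (hGF.trans hmF)]
    simpa using tendsto_integral_of_dominated_convergence (f := 0) (fun ω => c ω ^ 2)
      (fun i => (hr i).1) hc2.integrable_sq hr_norm
      (ae_of_all _ fun ω => tendsto_const_nhds.congr' <|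
        (tendsto_natCast_atTop_atTop.eventually_gt_atTop |c ω|).mono fun i hi => by
          simp [r, truncation_eq_self hi])

end ConditionalDominance

section Strategies

variable {μ : Measure Ω} {F : Filtration ℕ m} {S : ℕ → Ω → ℝ} {T k : ℕ} {ξ η : Ω → ℝ}
  {ϑ ψ : ℕ → Ω → ℝ}

def spliceStrategy (k : ℕ) (ξ η : Ω → ℝ) (ψ : ℕ → Ω → ℝ) : ℕ → Ω → ℝ :=
  fun j ω => if j = k then ξ ω else if k < j then η ω * ψ j ω else 0

lemma stronglyMeasurable_one_add_mul_increment (hS : ∀ j, StronglyMeasurable[F j] (S j))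
    (hξ : StronglyMeasurable[F (k - 1)] ξ) :
    StronglyMeasurable[F k] fun ω => 1 + ξ ω * (S k ω - S (k - 1) ω) :=
  stronglyMeasurable_const.add ((hξ.mono (F.mono (Nat.sub_le k 1))).mul
    ((hS k).sub ((hS (k - 1)).mono (F.mono (Nat.sub_le k 1)))))

lemma admissibleDiscrete_zero : AdmissibleDiscrete μ F S 0 :=
  ⟨fun _ _ => stronglyMeasurable_const, fun _ => by simp⟩

lemma admissibleDiscrete_spliceStrategy (hξ : StronglyMeasurable[F (k - 1)] ξ)
    (hξΔ : MemLp (fun ω => ξ ω * (S k ω - S (k - 1) ω)) 2 μ) (hη : StronglyMeasurable[F k] η)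
    (hηb : MemLp η ⊤ μ) (hψ : AdmissibleDiscrete μ F S ψ) :
    AdmissibleDiscrete μ F S (spliceStrategy k ξ η ψ) := by
  refine ⟨fun j hj => ?_, fun j => ?_⟩
  · unfold spliceStrategy
    split_ifs with hjk hkj
    · exact hjk ▸ hξ
    · exact (hη.mono (F.mono (by omega))).mul (hψ.1 j hj)
    · exact stronglyMeasurable_const
  · unfold spliceStrategy
    split_ifs with hjk hkj
    · exact hjk ▸ hξΔ
    · simpa only [mul_assoc] using (hψ.2 j).mul' hηb
    · simp

lemma memLp_gains (hϑ : AdmissibleDiscrete μ F S ϑ) : MemLp (gains S T k ϑ) 2 μ :=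
  memLp_finsetSum _ fun j _ => hϑ.2 j

lemma gains_pred (hk : 1 ≤ k) (hkT : k ≤ T) (ϑ : ℕ → Ω → ℝ) (ω : Ω) :
    gains S T (k - 1) ϑ ω = ϑ k ω * (S k ω - S (k - 1) ω) + gains S T k ϑ ω := by
  have : Finset.Ioc (k - 1) T = insert k (Finset.Ioc k T) := by
    ext j; simp only [Finset.mem_Ioc, Finset.mem_insert]; omega
  rw [gains, this, Finset.sum_insert (by simp), gains]

lemma gains_spliceStrategy (ω : Ω) :
    gains S T k (spliceStrategy k ξ η ψ) ω = η ω * gains S T k ψ ω := by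
  rw [gains, gains, Finset.mul_sum]
  refine Finset.sum_congr rfl fun j hj => ?_
  have hkj : k < j := (Finset.mem_Ioc.mp hj).1
  simp [spliceStrategy, hkj.ne', hkj, mul_assoc]

lemma one_add_gains_pred_spliceStrategy (hk : 1 ≤ k) (hkT : k ≤ T) (ω : Ω) :
    1 + gains S T (k - 1) (spliceStrategy k ξ η ψ) ω
      = (1 + ξ ω * (S k ω - S (k - 1) ω)) + η ω * gains S T k ψ ω := by
  rw [gains_pred hk hkT, gains_spliceStrategy, spliceStrategy, if_pos rfl, add_assoc]

end Strategies

section ValueProcess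

variable {μ : Measure Ω} [IsFiniteMeasure μ] {F : Filtration ℕ m} {S : ℕ → Ω → ℝ} {T k : ℕ}
  {Y : Ω → ℝ}

lemma condQuadMin_le_condExp_one_add_gains_sq (hk : 1 ≤ k) (hkT : k ≤ T)
    (hS : ∀ j, StronglyMeasurable[F j] (S j)) (hΔ : MemLp (fun ω => S k ω - S (k - 1) ω) 2 μ)
    (hYm : AEStronglyMeasurable[m] Y μ) (hY : ∀ᵐ ω ∂μ, Y ω ∈ Set.Icc (0 : ℝ) 1)
    (hYle : ∀ ϑ, AdmissibleDiscrete μ F S ϑ →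
      Y ≤ᵐ[μ] μ[fun ω => (1 + gains S T k ϑ ω) ^ 2 | F k])
    {ϑ : ℕ → Ω → ℝ} (hϑ : AdmissibleDiscrete μ F S ϑ) :
    condQuadMin μ (F (k - 1)) Y (fun ω => S k ω - S (k - 1) ω)
      ≤ᵐ[μ] μ[fun ω => (1 + gains S T (k - 1) ϑ ω) ^ 2 | F (k - 1)] := by
  set c : Ω → ℝ := fun ω => 1 + ϑ k ω * (S k ω - S (k - 1) ω)
  have hc : StronglyMeasurable[F k] c := stronglyMeasurable_one_add_mul_increment hS (hϑ.1 k hk)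
  have hcG : (fun ω => (c ω + gains S T k ϑ ω) ^ 2)
      = fun ω => (1 + gains S T (k - 1) ϑ ω) ^ 2 := by
    funext ω; rw [gains_pred hk hkT, ← add_assoc]
  have hq : Integrable (fun ω => (1 + gains S T (k - 1) ϑ ω) ^ 2) μ :=
    ((memLp_const (1 : ℝ)).add (memLp_gains hϑ)).integrable_sq
  have hcY : Integrable (fun ω => c ω ^ 2 * Y ω) μ :=
    ((memLp_const (1 : ℝ)).add (hϑ.2 k)).integrable_sq.mul_bdd hYm (by
      filter_upwards [hY] with ω hω using norm_le_one_of_mem_Icc hω)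
  have hdom := sq_mul_le_condExp_add_sq_of_forall_le (F.le k) hc (memLp_gains hϑ) (hcG ▸ hq)
    fun η hη hηb => by
      simpa only [gains_spliceStrategy] using hYle _ (admissibleDiscrete_spliceStrategy
        (ξ := 0) stronglyMeasurable_const (by simp) hη hηb hϑ)
  rw [hcG] at hdom
  filter_upwards [condQuadMin_le_condExp hYm hY hΔ (hϑ.1 k hk) (hϑ.2 k),
    condExp_mono (m := F (k - 1)) hcY integrable_condExp hdom,
    condExp_condExp_of_le (μ := μ) (F.mono (Nat.sub_le k 1)) (F.le k)
      (f := fun ω => (1 + gains S T (k - 1) ϑ ω) ^ 2)] with ω h₁ h₂ h₃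
  exact h₁.trans (h₂.trans_eq h₃)

lemma le_condQuadMin_of_optimal (hk : 1 ≤ k) (hkT : k ≤ T)
    (hS : ∀ j, StronglyMeasurable[F j] (S j)) (hΔ : MemLp (fun ω => S k ω - S (k - 1) ω) 2 μ)
    {Y' : Ω → ℝ} (hY'le : ∀ ϑ, AdmissibleDiscrete μ F S ϑ →
      Y' ≤ᵐ[μ] μ[fun ω => (1 + gains S T (k - 1) ϑ ω) ^ 2 | F (k - 1)])
    {ψ : ℕ → Ω → ℝ} (hψ : AdmissibleDiscrete μ F S ψ)
    (hYψ : Y =ᵐ[μ] μ[fun ω => (1 + gains S T k ψ ω) ^ 2 | F k])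
    (hY : ∀ᵐ ω ∂μ, Y ω ∈ Set.Icc (0 : ℝ) 1) :
    Y' ≤ᵐ[μ] condQuadMin μ (F (k - 1)) Y (fun ω => S k ω - S (k - 1) ω) := by
  refine le_condQuadMin_of_forall_le (F.le (k - 1)) (integrable_condExp.1.congr hYψ.symm) hY hΔ
    fun ξ hξ hξb => ?_
  refine le_condExp_sq_mul_of_forall_le (F.mono (Nat.sub_le k 1)) (F.le k)
    (stronglyMeasurable_one_add_mul_increment hS hξ) ((memLp_const (1 : ℝ)).add (hΔ.mul' hξb))
    (memLp_gains hψ) hYψ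
    (by filter_upwards [hY] with ω hω using hω.2) fun η hη hηb => ?_
  simpa only [one_add_gains_pred_spliceStrategy hk hkT] using
    hY'le _ (admissibleDiscrete_spliceStrategy hξ (hΔ.mul' hξb) hη hηb hψ)

end ValueProcess

theorem discrete_time_opportunity_recursion
    (μ : Measure Ω) [IsProbabilityMeasure μ]
    (F : Filtration ℕ m) (T : ℕ)
    (S : ℕ → Ω → ℝ)
    (hSadapt : ∀ k, StronglyMeasurable[F k] (S k))
    (hS2 : ∀ k, k ≤ T → MemLp (S k) 2 μ)
    (Y : ℕ → Ω → ℝ)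
    (hYle : ∀ k, k ≤ T → ∀ ϑ, AdmissibleDiscrete μ F S ϑ →
      Y k ≤ᵐ[μ] μ[fun ω => (1 + gains S T k ϑ ω) ^ 2 | F k])
    (hYglb : ∀ k, k ≤ T → ∀ W : Ω → ℝ,
      (∀ ϑ, AdmissibleDiscrete μ F S ϑ →
        W ≤ᵐ[μ] μ[fun ω => (1 + gains S T k ϑ ω) ^ 2 | F k]) → W ≤ᵐ[μ] Y k)
    (hopt : ∀ k, k ≤ T → ∃ ϑ, AdmissibleDiscrete μ F S ϑ ∧
      Y k =ᵐ[μ] μ[fun ω => (1 + gains S T k ϑ ω) ^ 2 | F k]) :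
    (∀ k, 1 ≤ k → k ≤ T →
      Y (k - 1) =ᵐ[μ] fun ω =>
        (μ[Y k | F (k - 1)]) ω -
          ((μ[fun ω' => Y k ω' * (S k ω' - S (k - 1) ω') | F (k - 1)]) ω) ^ 2 /
            (μ[fun ω' => Y k ω' * (S k ω' - S (k - 1) ω') ^ 2 | F (k - 1)]) ω) ∧
    Y T =ᵐ[μ] fun _ => 1 := by
  have hY01 : ∀ k ≤ T, ∀ᵐ ω ∂μ, Y k ω ∈ Set.Icc (0 : ℝ) 1 := fun k hk => by
    obtain ⟨ψ, -, hψ⟩ := hopt k hk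
    have hY1 := hYle k hk 0 admissibleDiscrete_zero
    simp only [gains, Pi.zero_apply, zero_mul, Finset.sum_const_zero, add_zero, one_pow,
      condExp_const (F.le k)] at hY1
    filter_upwards [hψ, hY1,
      condExp_nonneg (m := F k) (ae_of_all μ fun ω => sq_nonneg (1 + gains S T k ψ ω))]
      with ω h₁ h₂ h₃
    exact ⟨h₁ ▸ h₃, h₂⟩
  refine ⟨fun k hk hkT => ?_, ?_⟩
  · have hk' : k - 1 ≤ T := by omega
    have hΔ : MemLp (fun ω => S k ω - S (k - 1) ω) 2 μ := (hS2 k hkT).sub (hS2 (k - 1) hk')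
    obtain ⟨ψ, hψ, hYψ⟩ := hopt k hkT
    have hupper := le_condQuadMin_of_optimal hk hkT hSadapt hΔ (hYle (k - 1) hk') hψ hYψ
      (hY01 k hkT)
    have hlower := hYglb (k - 1) hk' _ fun ϑ hϑ =>
      condQuadMin_le_condExp_one_add_gains_sq hk hkT hSadapt hΔ
        (integrable_condExp.1.congr hYψ.symm) (hY01 k hkT) (hYle k hkT) hϑ
    exact hupper.antisymm hlower
  · refine EventuallyLE.antisymm ?_ ?_
    · filter_upwards [hY01 T le_rfl] with ω hω using hω.2
    · refine hYglb T le_rfl _ fun ϑ _ => ?_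
      simp only [gains, Finset.Ioc_self, Finset.sum_empty, add_zero, one_pow,
        condExp_const (F.le T)]
      exact EventuallyLE.rfl
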